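/- In Example 1 (problem -y''=λy, y'(0)=0, 3λy(1)=(λ-3)y'(1); λ₀=0 triple eigenvalue; y₀=1, y₁=-x²/2+C), the modified associated function y₁^# := y₁ + C₂·y₀ with C₂ = 5/21 - 2C satisfies y₁^#(x) = -x²/2 + 5/21 - C, and the boundary functional 𝔄(y₁^#) = y₁^#(1)/(-3) - y₀(1)/9 equals -1/42 + C/3; hence 𝔄(y₁^#) = 0 if and only if C = 1/14, in which case y₁^#(x) = -x²/2 + 7/42 is orthogonal to y₀ and to every eigenfunction y_n(x) = cos(√λ_n x) with λ_n > 0 satisfying 3λ_n cos√λ_n + (λ_n - 3)√λ_n sin√λ_n = 0, i.e., ∫₀¹ (-x²/2 + 7/42)·1 dx = 0 and ∫₀¹ (-x²/2 + 7/42)·cos(√λ_n x) dx = 0 for every such λ_n. -/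

import Mathlib

open MeasureTheory

lemma key_integral (s : ℝ) (hs : 0 < s) :
    ∫ x in (0:ℝ)..1, (7 / 42 - x ^ 2 / 2) * Real.cos (s * x)
      = -Real.sin s / (3 * s) - Real.cos s / s ^ 2 + Real.sin s / s ^ 3 := by
  have hs' : s ≠ 0 := ne_of_gt hs
  set F : ℝ → ℝ := fun x =>
    (7 / 42 - x ^ 2 / 2) * Real.sin (s * x) / s - x * Real.cos (s * x) / s ^ 2
      + Real.sin (s * x) / s ^ 3 with hF
  have hderiv : ∀ x ∈ Set.uIcc (0:ℝ) 1, HasDerivAt F ((7 / 42 - x ^ 2 / 2) * Real.cos (s * x)) x := by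
    intro x _
    have hsin : HasDerivAt (fun x : ℝ => Real.sin (s * x)) (Real.cos (s * x) * s) x := by
      simpa [Function.comp_def] using (Real.hasDerivAt_sin (s * x)).comp x ((hasDerivAt_id x).const_mul s)
    have hcos : HasDerivAt (fun x : ℝ => Real.cos (s * x)) (-Real.sin (s * x) * s) x := by
      simpa [Function.comp_def] using (Real.hasDerivAt_cos (s * x)).comp x ((hasDerivAt_id x).const_mul s)
    have hpoly : HasDerivAt (fun x : ℝ => (7 / 42 - x ^ 2 / 2)) (-x) x := by
      have : HasDerivAt (fun x : ℝ => (7 / 42 - x ^ 2 / 2)) (-(2 * x ^ (2-1) / 2)) x := by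
        exact ((hasDerivAt_pow 2 x).div_const 2).const_sub (7/42)
      simpa using this
    have h1 : HasDerivAt (fun x => (7 / 42 - x ^ 2 / 2) * Real.sin (s * x) / s)
        ((-x * Real.sin (s * x) + (7 / 42 - x ^ 2 / 2) * (Real.cos (s * x) * s)) / s) x :=
      (hpoly.mul hsin).div_const s
    have h2 : HasDerivAt (fun x : ℝ => x * Real.cos (s * x) / s ^ 2)
        ((1 * Real.cos (s * x) + x * (-Real.sin (s * x) * s)) / s ^ 2) x :=
      ((hasDerivAt_id x).mul hcos).div_const _
    have h3 : HasDerivAt (fun x : ℝ => Real.sin (s * x) / s ^ 3)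
        ((Real.cos (s * x) * s) / s ^ 3) x := hsin.div_const _
    have := (h1.sub h2).add h3
    refine this.congr_deriv ?_
    field_simp
    ring
  have hcont : IntervalIntegrable (fun x => (7 / 42 - x ^ 2 / 2) * Real.cos (s * x))
      MeasureTheory.volume 0 1 := by
    apply Continuous.intervalIntegrable
    continuity
  have := intervalIntegral.integral_eq_sub_of_hasDerivAt hderiv hcont
  rw [this]
  simp [hF]
  field_simp
  ring

theorem example_one_special_assoc_function (C : ℝ) :
    let y0 : ℝ → ℝ := fun _ => 1
    let y1 : ℝ → ℝ := fun x => -x ^ 2 / 2 + C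
    let y1h : ℝ → ℝ := fun x => y1 x + (5 / 21 - 2 * C) * y0 x
    (∀ x : ℝ, y1h x = -x ^ 2 / 2 + 5 / 21 - C) ∧
    (y1h 1 / (-3) - y0 1 / 9 = -1 / 42 + C / 3) ∧
    ((y1h 1 / (-3) - y0 1 / 9 = 0) ↔ C = 1 / 14) ∧
    (∫ x in (0:ℝ)..1, (7 / 42 - x ^ 2 / 2) * 1 = 0) ∧
    (∀ lam : ℝ, 0 < lam →
      3 * lam * Real.cos (Real.sqrt lam)
        + (lam - 3) * Real.sqrt lam * Real.sin (Real.sqrt lam) = 0 →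
      ∫ x in (0:ℝ)..1, (7 / 42 - x ^ 2 / 2) * Real.cos (Real.sqrt lam * x) = 0) := by
  refine ⟨fun x => by ring, by norm_num; ring, by simp only []; constructor <;> intro h <;> linarith, ?_, ?_⟩
  · have : ∫ x in (0:ℝ)..1, (7 / 42 - x ^ 2 / 2) * 1
        = ∫ x in (0:ℝ)..1, (7 / 42 - x ^ 2 / 2) := by
      congr 1; ext x; ring
    rw [this]
    have h2 : ∫ x in (0:ℝ)..1, (x ^ 2 / 2) = 1/6 := by
      rw [intervalIntegral.integral_div, integral_pow]; norm_num
    rw [intervalIntegral.integral_sub (by apply Continuous.intervalIntegrable; continuity)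
      (by apply Continuous.intervalIntegrable; continuity), h2]
    simp
    norm_num
  · intro lam hlam h
    set s := Real.sqrt lam with hsdef
    have hs : 0 < s := Real.sqrt_pos.mpr hlam
    have hlam2 : lam = s ^ 2 := (Real.sq_sqrt hlam.le).symm
    rw [key_integral s hs]
    rw [hlam2] at h
    have hs' : s ≠ 0 := ne_of_gt hs
    field_simp
    nlinarith [h]
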